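/- Let R > 0 and let f : (-R, R) → ℝ be an (M₁, M₂)-diffeomorphism. Let d ≥ 1 be an integer and let 0 < γ₀ < γ₁ < ⋯ < γ_d = 1 be scale parameters. For each 1 ≤ k ≤ d define Δ_k := f_[γ_k] ∘ f_[γ_{k−1}]⁻¹ and ψ_k(x) := Δ_k(x) − x, where f_[γ](x) := f(γx)/γ. Then ψ_k is C₂-smooth on its domain, i.e., its second derivative satisfies |ψ_k''(x)| ≤ C₂ for all x, where C₂ := M₂·(M₁² + M₁). -/

import Mathlib

/-!
Write `a = γ_{k-1}`, `b = γ_k`. Since `g_[a]` inverts `f_[a]`, the rung is `ψ = f_[b] ∘ g_[a] - id`,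
and the chain rule gives `ψ'' = b f''(b g_[a]) (g'(a ·))² + a f'(b g_[a]) g''(a ·)` on the open set
`f_[a](-R, R)`. A function that is `M`-Lipschitz near a point has derivative at most `M` there, so
`|f'|, |g'| ≤ M₁` and `|f''|, |g''| ≤ M₂`; with `0 < a, b ≤ 1` this gives `|ψ''| ≤ M₂ (M₁² + M₁)`.
-/

open Set Filter Topology

theorem mem_Ioc_zero_one_of_le_succ {γ : ℕ → ℝ} {d : ℕ} (h0 : 0 < γ 0)
    (hmono : ∀ i < d, γ i ≤ γ (i + 1)) (hd : γ d = 1) {i : ℕ} (hi : i ≤ d) : γ i ∈ Ioc 0 1 := by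
  have hγ : MonotoneOn γ (Iic d) :=
    monotoneOn_of_le_succ ordConnected_Iic fun j _ _ hj => hmono j (Nat.lt_of_succ_le hj)
  exact ⟨h0.trans_le (hγ (Nat.zero_le d) hi (Nat.zero_le i)), hd ▸ hγ hi (mem_Iic.2 le_rfl) hi⟩

theorem mul_mem_Ioo_neg_self {R c t : ℝ} (hc : |c| ≤ 1) (ht : t ∈ Ioo (-R) R) :
    c * t ∈ Ioo (-R) R := by
  rw [mem_Ioo, ← abs_lt] at ht ⊢
  calc |c * t| = |c| * |t| := abs_mul c t
    _ ≤ |t| := mul_le_of_le_one_left (abs_nonneg t) hc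
    _ < R := ht

theorem isOpen_image_Ioo_of_injOn {a b : ℝ} {f : ℝ → ℝ} (hc : ContinuousOn f (Ioo a b))
    (hi : InjOn f (Ioo a b)) : IsOpen (f '' Ioo a b) := by
  rw [isOpen_iff_mem_nhds]
  rintro _ ⟨x, ⟨hax, hxb⟩, rfl⟩
  obtain ⟨u, hau, hux⟩ := exists_between hax
  obtain ⟨v, hxv, hvb⟩ := exists_between hxb
  have hsub : Icc u v ⊆ Ioo a b := Icc_subset_Ioo hau hvb
  have huv : u ≤ v := (hux.trans hxv).le
  have hx : x ∈ Icc u v := ⟨hux.le, hxv.le⟩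
  have himage : f '' Ioo u v ⊆ f '' Ioo a b := image_mono (Ioo_subset_Icc_self.trans hsub)
  rcases (hc.mono hsub).strictMonoOn_of_injOn_Icc' huv (hi.mono hsub) with hm | hm
  · refine mem_of_superset (Ioo_mem_nhds ?_ ?_)
      ((intermediate_value_Ioo huv (hc.mono hsub)).trans himage)
    · exact hm (left_mem_Icc.2 huv) hx hux
    · exact hm hx (right_mem_Icc.2 huv) hxv
  · refine mem_of_superset (Ioo_mem_nhds ?_ ?_)
      ((intermediate_value_Ioo' huv (hc.mono hsub)).trans himage)
    · exact hm hx (right_mem_Icc.2 huv) hxv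
    · exact hm (left_mem_Icc.2 huv) hx hux

theorem abs_le_of_hasDerivAt_of_lipschitzOn {F : ℝ → ℝ} {s : Set ℝ} {M c x : ℝ} (hs : s ∈ 𝓝 x)
    (hlip : ∀ y ∈ s, ∀ z ∈ s, |F y - F z| ≤ M * |y - z|) (hF : HasDerivAt F c x) : |c| ≤ M := by
  obtain ⟨ε, hε, hball⟩ := Metric.mem_nhds_iff.1 hs
  have hM : 0 ≤ M := by
    have hy : x + ε / 2 ∈ s := hball <| by
      rw [Metric.mem_ball, Real.dist_eq, add_sub_cancel_left, abs_of_pos (half_pos hε)]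
      exact half_lt_self hε
    have := (abs_nonneg _).trans (hlip _ hy x (mem_of_mem_nhds hs))
    rw [add_sub_cancel_left, abs_of_pos (half_pos hε)] at this
    exact nonneg_of_mul_nonneg_left this (half_pos hε)
  exact hF.le_of_lip' hM (eventually_of_mem hs fun y hy => hlip y hy x (mem_of_mem_nhds hs))

theorem HasDerivAt.comp_const_mul {f : ℝ → ℝ} {c γ x : ℝ} (hf : HasDerivAt f c (γ * x)) :
    HasDerivAt (fun y => f (γ * y)) (γ * c) x :=
  (hf.comp x (hasDerivAt_const_mul γ)).congr_deriv (mul_comm c γ)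

noncomputable def dilation (f : ℝ → ℝ) (γ x : ℝ) : ℝ := f (γ * x) / γ

theorem HasDerivAt.dilation {f : ℝ → ℝ} {c γ x : ℝ} (hf : HasDerivAt f c (γ * x)) (hγ : γ ≠ 0) :
    HasDerivAt (dilation f γ) c x :=
  (hf.comp_const_mul.div_const γ).congr_deriv (mul_div_cancel_left₀ c hγ)

theorem Set.LeftInvOn.dilation {f g : ℝ → ℝ} {s : Set ℝ} {γ : ℝ} (h : LeftInvOn g f s)
    (hγ : γ ≠ 0) : LeftInvOn (dilation g γ) (dilation f γ) ((γ * ·) ⁻¹' s) := by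
  intro x hx
  simp only [_root_.dilation, mul_div_cancel₀ _ hγ, h hx]
  field_simp

noncomputable def ladderRung (f g : ℝ → ℝ) (a b x : ℝ) : ℝ := dilation f b (dilation g a x) - x

section ladderRung

variable {f g f' g' f'' g'' : ℝ → ℝ} {a b x : ℝ}

theorem hasDerivAt_ladderRung (ha : a ≠ 0) (hb : b ≠ 0) (hg : HasDerivAt g (g' (a * x)) (a * x))
    (hf : HasDerivAt f (f' (b * dilation g a x)) (b * dilation g a x)) :
    HasDerivAt (ladderRung f g a b) (f' (b * dilation g a x) * g' (a * x) - 1) x :=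
  ((hf.dilation hb).comp x (hg.dilation ha)).sub (hasDerivAt_id x)

theorem hasDerivAt_deriv_ladderRung (ha : a ≠ 0) (hg : HasDerivAt g (g' (a * x)) (a * x))
    (hg' : HasDerivAt g' (g'' (a * x)) (a * x))
    (hf' : HasDerivAt f' (f'' (b * dilation g a x)) (b * dilation g a x)) :
    HasDerivAt (fun y => f' (b * dilation g a y) * g' (a * y) - 1)
      (b * f'' (b * dilation g a x) * g' (a * x) ^ 2 + a * f' (b * dilation g a x) * g'' (a * x))
      x := by
  have hinner := (hg.dilation ha).const_mul b
  refine ((hf'.comp x hinner).mul hg'.comp_const_mul).sub_const 1 |>.congr_deriv ?_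
  simp only [Function.comp_apply]
  ring

theorem deriv_deriv_ladderRung {U V S : Set ℝ} (ha : a ≠ 0) (hb : b ≠ 0)
    (hf : ∀ u ∈ U, HasDerivAt f (f' u) u) (hf' : ∀ u ∈ U, HasDerivAt f' (f'' u) u)
    (hg : ∀ v ∈ V, HasDerivAt g (g' v) v) (hg' : ∀ v ∈ V, HasDerivAt g' (g'' v) v)
    (hS : IsOpen S) (hSU : ∀ y ∈ S, b * dilation g a y ∈ U) (hSV : ∀ y ∈ S, a * y ∈ V)
    (hx : x ∈ S) :
    deriv (deriv (ladderRung f g a b)) x = b * f'' (b * dilation g a x) * g' (a * x) ^ 2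
      + a * f' (b * dilation g a x) * g'' (a * x) := by
  have hderiv : EqOn (deriv (ladderRung f g a b))
      (fun y => f' (b * dilation g a y) * g' (a * y) - 1) S := fun y hy =>
    (hasDerivAt_ladderRung ha hb (hg _ (hSV y hy)) (hf _ (hSU y hy))).deriv
  rw [(hderiv.eventuallyEq_of_mem (hS.mem_nhds hx)).deriv_eq]
  exact (hasDerivAt_deriv_ladderRung ha (hg _ (hSV x hx)) (hg' _ (hSV x hx))
    (hf' _ (hSU x hx))).deriv

end ladderRung

theorem abs_add_mul_le {a b A B C D M₁ M₂ : ℝ} (ha : |a| ≤ 1) (hb : |b| ≤ 1) (hA : |A| ≤ M₂)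
    (hB : |B| ≤ M₁) (hC : |C| ≤ M₁) (hD : |D| ≤ M₂) :
    |b * A * B ^ 2 + a * C * D| ≤ M₂ * (M₁ ^ 2 + M₁) := by
  have hM₁ : 0 ≤ M₁ := (abs_nonneg B).trans hB
  have hM₂ : 0 ≤ M₂ := (abs_nonneg A).trans hA
  calc |b * A * B ^ 2 + a * C * D| ≤ |b| * |A| * |B| ^ 2 + |a| * |C| * |D| :=  
        (abs_add_le _ _).trans_eq (by rw [abs_mul, abs_mul, abs_pow, abs_mul, abs_mul])
    _ ≤ 1 * M₂ * M₁ ^ 2 + 1 * M₁ * M₂ := by gcongr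
    _ = M₂ * (M₁ ^ 2 + M₁) := by ring

theorem ladder_rung_smooth_general
    (R M₁ M₂ : ℝ) (d : ℕ)
    (γ : ℕ → ℝ) (hγ0 : 0 < γ 0) (hγmono : ∀ i, i < d → γ i < γ (i + 1)) (hγd : γ d = 1)
    (f g f' g' f'' g'' : ℝ → ℝ)
    (hgf : ∀ x ∈ Set.Ioo (-R) R, g (f x) = x)
    (hf_lip : ∀ x ∈ Set.Ioo (-R) R, ∀ y ∈ Set.Ioo (-R) R, |f x - f y| ≤ M₁ * |x - y|)
    (hf' : ∀ x ∈ Set.Ioo (-R) R, HasDerivAt f (f' x) x)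
    (hf'' : ∀ x ∈ Set.Ioo (-R) R, HasDerivAt f' (f'' x) x)
    (hf'_lip : ∀ x ∈ Set.Ioo (-R) R, ∀ y ∈ Set.Ioo (-R) R, |f' x - f' y| ≤ M₂ * |x - y|)
    (hg_lip : ∀ x ∈ f '' Set.Ioo (-R) R, ∀ y ∈ f '' Set.Ioo (-R) R, |g x - g y| ≤ M₁ * |x - y|)
    (hg' : ∀ x ∈ f '' Set.Ioo (-R) R, HasDerivAt g (g' x) x)
    (hg'' : ∀ x ∈ f '' Set.Ioo (-R) R, HasDerivAt g' (g'' x) x)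
    (hg'_lip : ∀ x ∈ f '' Set.Ioo (-R) R, ∀ y ∈ f '' Set.Ioo (-R) R,
      |g' x - g' y| ≤ M₂ * |x - y|)
    (k : ℕ) (hkd : k ≤ d) :
    ∀ x ∈ (fun t => f (γ (k - 1) * t) / γ (k - 1)) '' Set.Ioo (-R) R,
      |deriv (deriv (fun y => f (γ k * (g (γ (k - 1) * y) / γ (k - 1))) / γ k - y)) x|
        ≤ M₂ * (M₁ ^ 2 + M₁) := by
  intro x hx
  set a := γ (k - 1)
  set b := γ k
  have hγle : ∀ i < d, γ i ≤ γ (i + 1) := fun i hi => (hγmono i hi).le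
  obtain ⟨ha, ha1⟩ := mem_Ioc_zero_one_of_le_succ hγ0 hγle hγd ((k.sub_le 1).trans hkd)
  obtain ⟨hb, hb1⟩ := mem_Ioc_zero_one_of_le_succ hγ0 hγle hγd hkd
  have ha' : |a| ≤ 1 := abs_le.2 ⟨by linarith, ha1⟩
  have hb' : |b| ≤ 1 := abs_le.2 ⟨by linarith, hb1⟩
  have hinv : LeftInvOn (dilation g a) (dilation f a) (Ioo (-R) R) :=
    (LeftInvOn.dilation hgf ha.ne').mono fun t ht => mul_mem_Ioo_neg_self ha' ht
  have hfI : IsOpen (f '' Ioo (-R) R) := isOpen_image_Ioo_of_injOn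
    (fun t ht => (hf' t ht).continuousAt.continuousWithinAt) (LeftInvOn.injOn hgf)
  have hS : IsOpen (dilation f a '' Ioo (-R) R) := isOpen_image_Ioo_of_injOn (fun t ht =>
    ((hf' _ (mul_mem_Ioo_neg_self ha' ht)).dilation ha.ne').continuousAt.continuousWithinAt)
    hinv.injOn
  have hSV : ∀ y ∈ dilation f a '' Ioo (-R) R, a * y ∈ f '' Ioo (-R) R := by
    rintro _ ⟨t, ht, rfl⟩
    exact ⟨a * t, mul_mem_Ioo_neg_self ha' ht, (mul_div_cancel₀ _ ha.ne').symm⟩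
  have hSU : ∀ y ∈ dilation f a '' Ioo (-R) R, b * dilation g a y ∈ Ioo (-R) R := by
    rintro _ ⟨t, ht, rfl⟩
    rw [hinv ht]
    exact mul_mem_Ioo_neg_self hb' ht
  change |deriv (deriv (ladderRung f g a b)) x| ≤ _
  rw [deriv_deriv_ladderRung ha.ne' hb.ne' hf' hf'' hg' hg'' hS hSU hSV hx]
  have hU := isOpen_Ioo.mem_nhds (hSU x hx)
  have hV := hfI.mem_nhds (hSV x hx)
  exact abs_add_mul_le ha' hb'
    (abs_le_of_hasDerivAt_of_lipschitzOn hU hf'_lip (hf'' _ (hSU x hx)))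
    (abs_le_of_hasDerivAt_of_lipschitzOn hV hg_lip (hg' _ (hSV x hx)))
    (abs_le_of_hasDerivAt_of_lipschitzOn hU hf_lip (hf' _ (hSU x hx)))
    (abs_le_of_hasDerivAt_of_lipschitzOn hV hg'_lip (hg'' _ (hSV x hx)))

/-- Let `f : (-R, R) → ℝ` be an `(M₁, M₂)`-diffeomorphism (with inverse `g`,
first/second derivatives `f', f''` and `g', g''`), let `0 < γ₀ < γ₁ < ⋯ < γ_d = 1`.
For `1 ≤ k ≤ d` the rung `ψ_k(x) = f_[γ_k](f_[γ_{k-1}]⁻¹(x)) - x` of the ladder decomposition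
is `C₂`-smooth on its domain, i.e. its second derivative is bounded in absolute value by
`C₂ = M₂·(M₁² + M₁)`. -/
theorem ladder_rung_smooth
    (R M₁ M₂ : ℝ) (hR : 0 < R) (d : ℕ) (hd : 1 ≤ d)
    (γ : ℕ → ℝ) (hγ0 : 0 < γ 0) (hγmono : ∀ i, i < d → γ i < γ (i + 1)) (hγd : γ d = 1)
    (f g f' g' f'' g'' : ℝ → ℝ)
    (hgf : ∀ x ∈ Set.Ioo (-R) R, g (f x) = x)
    (hf_lip : ∀ x ∈ Set.Ioo (-R) R, ∀ y ∈ Set.Ioo (-R) R, |f x - f y| ≤ M₁ * |x - y|)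
    (hf' : ∀ x ∈ Set.Ioo (-R) R, HasDerivAt f (f' x) x)
    (hf'' : ∀ x ∈ Set.Ioo (-R) R, HasDerivAt f' (f'' x) x)
    (hf'_lip : ∀ x ∈ Set.Ioo (-R) R, ∀ y ∈ Set.Ioo (-R) R, |f' x - f' y| ≤ M₂ * |x - y|)
    (hg_lip : ∀ x ∈ f '' Set.Ioo (-R) R, ∀ y ∈ f '' Set.Ioo (-R) R, |g x - g y| ≤ M₁ * |x - y|)
    (hg' : ∀ x ∈ f '' Set.Ioo (-R) R, HasDerivAt g (g' x) x)
    (hg'' : ∀ x ∈ f '' Set.Ioo (-R) R, HasDerivAt g' (g'' x) x)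
    (hg'_lip : ∀ x ∈ f '' Set.Ioo (-R) R, ∀ y ∈ f '' Set.Ioo (-R) R,
      |g' x - g' y| ≤ M₂ * |x - y|)
    (k : ℕ) (hk1 : 1 ≤ k) (hkd : k ≤ d) :
    ∀ x ∈ (fun t => f (γ (k - 1) * t) / γ (k - 1)) '' Set.Ioo (-R) R,
      |deriv (deriv (fun y => f (γ k * (g (γ (k - 1) * y) / γ (k - 1))) / γ k - y)) x|
        ≤ M₂ * (M₁ ^ 2 + M₁) :=
  ladder_rung_smooth_general R M₁ M₂ d γ hγ0 hγmono hγd f g f' g' f'' g'' hgf hf_lip hf' hf''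
    hf'_lip hg_lip hg' hg'' hg'_lip k hkd
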